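/- Let {Y_n}_{n≥1} be independent, non-negative real random variables, and set 𝔖 := Σ_{n=1}^∞ Y_n and M_k := Σ_{n=1}^∞ E[Y_n^k] for k > 0. Define constants λ_{2,1} := 1, λ_{q,0} := 2^{q−2} for integers q ≥ 2, and λ_{q+1,h} := 2^{q−1} λ_{q,h−1} for h = 1, …, q. Then for every integer q ≥ 2, E[𝔖^q] ≤ λ_{q,q−1} M_1^q + Σ_{k=0}^{q−2} λ_{q,k} M_{q−k} M_1^k. -/

import Mathlib

/-!
Writing `S = ∑ Yₙ`, one has `S^(p+1) = ∑ₙ Yₙ S^p`. Splitting `S = Yₙ + Tₙ` with `Tₙ`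
independent of `Yₙ`, the bound `(a + b)^p ≤ 2^(p-1) (a^p + b^p)` and independence give
`E[Yₙ S^p] ≤ 2^(p-1) (E[Yₙ^(p+1)] + E[Yₙ] E[S^p])`, hence
`E[S^(p+1)] ≤ 2^(p-1) (M_{p+1} + M₁ E[S^p])`. Unrolling this recursion from `E[S] = M₁`
produces exactly the constants `λ_{q,h}`. Everything is first done for finite sums, then
passed to the limit by monotone convergence.
-/

open MeasureTheory ProbabilityTheory Filter
open scoped ENNReal Topology

noncomputable section

/-- The constants `λ_{q,h}` of the moment inequality: `λ_{2,1} = 1`,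
`λ_{q,0} = 2^{q-2}` and `λ_{q+1,h} = 2^{q-1} λ_{q,h-1}` for `h = 1, …, q`. -/
noncomputable def lamST : ℕ → ℕ → ℝ
  | q, 0 => 2 ^ (q - 2)
  | q + 1, h + 1 => 2 ^ (q - 1) * lamST q h
  | 0, _ + 1 => 0

lemma ofReal_lamST_add_two_zero (q : ℕ) : ENNReal.ofReal (lamST (q + 2) 0) = 2 ^ q := by
  simp [lamST]

lemma ofReal_lamST_succ_succ (q h : ℕ) :
    ENNReal.ofReal (lamST (q + 1) (h + 1)) = 2 ^ (q - 1) * ENNReal.ofReal (lamST q h) := by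
  rw [lamST, ENNReal.ofReal_mul (by positivity), ENNReal.ofReal_pow zero_le_two,
    ENNReal.ofReal_ofNat]

lemma le_lamST_bound_of_le_two_pow_mul {A M : ℕ → ℝ≥0∞} {m : ℝ≥0∞} (h₁ : A 1 ≤ m)
    (hstep : ∀ p, A (p + 1) ≤ 2 ^ (p - 1) * M (p + 1) + 2 ^ (p - 1) * m * A p)
    {q : ℕ} (hq : 1 ≤ q) :
    A q ≤ ENNReal.ofReal (lamST q (q - 1)) * m ^ q
      + ∑ k ∈ Finset.range (q - 1), ENNReal.ofReal (lamST q k) * M (q - k) * m ^ k := by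
  obtain ⟨u, rfl⟩ : ∃ u, q = u + 1 := ⟨q - 1, by omega⟩
  induction u with
  | zero => simpa [lamST] using h₁
  | succ u ih =>
    calc A (u + 2)
        ≤ 2 ^ u * M (u + 2) + 2 ^ u * m * A (u + 1) := hstep (u + 1)
      _ ≤ 2 ^ u * M (u + 2) + 2 ^ u * m * (ENNReal.ofReal (lamST (u + 1) u) * m ^ (u + 1)
            + ∑ k ∈ Finset.range u, ENNReal.ofReal (lamST (u + 1) k) * M (u + 1 - k) * m ^ k) := by
          have ih := ih (by omega)
          simp only [Nat.add_sub_cancel] at ih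
          gcongr
      _ = _ := by
          have hsum : ∑ k ∈ Finset.range u,
                ENNReal.ofReal (lamST (u + 2) (k + 1)) * M (u + 2 - (k + 1)) * m ^ (k + 1)
              = 2 ^ u * m * ∑ k ∈ Finset.range u,
                  ENNReal.ofReal (lamST (u + 1) k) * M (u + 1 - k) * m ^ k := by
            rw [Finset.mul_sum]
            refine Finset.sum_congr rfl fun k _ => ?_
            rw [ofReal_lamST_succ_succ, Nat.add_sub_cancel,
              show u + 2 - (k + 1) = u + 1 - k by omega]
            ring
          rw [show u + 2 - 1 = u + 1 from rfl, Finset.sum_range_succ', hsum,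
            ofReal_lamST_succ_succ, ofReal_lamST_add_two_zero]
          simp only [Nat.add_sub_cancel, Nat.sub_zero, pow_zero, mul_one]
          ring

namespace ENNReal

protected lemma add_pow_le (a b : ℝ≥0∞) (n : ℕ) :
    (a + b) ^ n ≤ 2 ^ (n - 1) * (a ^ n + b ^ n) := by
  rcases eq_or_ne n 0 with rfl | hn
  · simp
  rcases eq_or_ne a ∞ with rfl | ha
  · simp [hn]
  rcases eq_or_ne b ∞ with rfl | hb
  · simp [hn]
  lift a to NNReal using ha
  lift b to NNReal using hb
  exact_mod_cast add_pow_le (a := a) (b := b) zero_le zero_le n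

end ENNReal

section FiniteSums

variable {Ω ι : Type*} [MeasurableSpace Ω] {P : Measure Ω} {Z : ι → Ω → ℝ≥0∞}

lemma lintegral_mul_sum_pow_le (hZ : ∀ i, Measurable (Z i)) (hindep : iIndepFun Z P)
    {s : Finset ι} {i : ι} (hi : i ∈ s) (p : ℕ) :
    ∫⁻ ω, Z i ω * (∑ j ∈ s, Z j ω) ^ p ∂P
      ≤ 2 ^ (p - 1) * (∫⁻ ω, Z i ω ^ (p + 1) ∂P
          + (∫⁻ ω, Z i ω ∂P) * ∫⁻ ω, (∑ j ∈ s, Z j ω) ^ p ∂P) := by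
  classical
  set T : Ω → ℝ≥0∞ := fun ω => ∑ j ∈ s.erase i, Z j ω
  have hT : Measurable T := Finset.measurable_sum _ fun j _ => hZ j
  have hsplit : ∀ ω, ∑ j ∈ s, Z j ω = Z i ω + T ω := fun ω =>
    (Finset.add_sum_erase s (fun j => Z j ω) hi).symm
  have hindep_T : IndepFun (fun ω => T ω ^ p) (Z i) P := by
    have h := hindep.indepFun_finsetSum_of_notMem hZ (s.notMem_erase i)
    rw [Finset.sum_fn] at h
    exact h.comp (measurable_id.pow_const p) measurable_id
  have hT_le : ∫⁻ ω, T ω ^ p ∂P ≤ ∫⁻ ω, (∑ j ∈ s, Z j ω) ^ p ∂P :=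
    lintegral_mono fun ω => pow_le_pow_left' (Finset.sum_le_sum_of_subset (s.erase_subset i)) p
  calc ∫⁻ ω, Z i ω * (∑ j ∈ s, Z j ω) ^ p ∂P
      ≤ ∫⁻ ω, 2 ^ (p - 1) * (Z i ω ^ (p + 1) + Z i ω * T ω ^ p) ∂P :=
        lintegral_mono fun ω => by
          rw [hsplit]
          calc Z i ω * (Z i ω + T ω) ^ p
              ≤ Z i ω * (2 ^ (p - 1) * (Z i ω ^ p + T ω ^ p)) := by
                gcongr; exact ENNReal.add_pow_le _ _ p
            _ = 2 ^ (p - 1) * (Z i ω ^ (p + 1) + Z i ω * T ω ^ p) := by ring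
    _ = 2 ^ (p - 1) * (∫⁻ ω, Z i ω ^ (p + 1) ∂P + (∫⁻ ω, Z i ω ∂P) * ∫⁻ ω, T ω ^ p ∂P) := by
        rw [lintegral_const_mul' _ _ (by simp), lintegral_add_left ((hZ i).pow_const _),
          lintegral_mul_eq_lintegral_mul_lintegral_of_indepFun'' (hZ i).aemeasurable
            (hT.pow_const p).aemeasurable hindep_T.symm]
    _ ≤ _ := by gcongr

lemma lintegral_sum_pow_succ_le (hZ : ∀ i, Measurable (Z i)) (hindep : iIndepFun Z P)
    (s : Finset ι) (p : ℕ) :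
    ∫⁻ ω, (∑ i ∈ s, Z i ω) ^ (p + 1) ∂P
      ≤ 2 ^ (p - 1) * ∑ i ∈ s, ∫⁻ ω, Z i ω ^ (p + 1) ∂P
        + 2 ^ (p - 1) * (∑ i ∈ s, ∫⁻ ω, Z i ω ∂P) * ∫⁻ ω, (∑ i ∈ s, Z i ω) ^ p ∂P :=
  calc ∫⁻ ω, (∑ i ∈ s, Z i ω) ^ (p + 1) ∂P
      = ∑ i ∈ s, ∫⁻ ω, Z i ω * (∑ j ∈ s, Z j ω) ^ p ∂P := by
        simp_rw [pow_succ', Finset.sum_mul]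
        exact lintegral_finsetSum _ fun i _ =>
          (hZ i).mul ((Finset.measurable_sum _ fun j _ => hZ j).pow_const p)
    _ ≤ ∑ i ∈ s, 2 ^ (p - 1) * (∫⁻ ω, Z i ω ^ (p + 1) ∂P
          + (∫⁻ ω, Z i ω ∂P) * ∫⁻ ω, (∑ j ∈ s, Z j ω) ^ p ∂P) :=
        Finset.sum_le_sum fun i hi => lintegral_mul_sum_pow_le hZ hindep hi p
    _ = _ := by rw [← Finset.mul_sum, Finset.sum_add_distrib, ← Finset.sum_mul, mul_add, mul_assoc]

theorem lintegral_sum_pow_le_lamST (hZ : ∀ i, Measurable (Z i)) (hindep : iIndepFun Z P)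
    (s : Finset ι) {q : ℕ} (hq : 1 ≤ q) :
    ∫⁻ ω, (∑ i ∈ s, Z i ω) ^ q ∂P
      ≤ ENNReal.ofReal (lamST q (q - 1)) * (∑ i ∈ s, ∫⁻ ω, Z i ω ∂P) ^ q
        + ∑ k ∈ Finset.range (q - 1), ENNReal.ofReal (lamST q k)
            * (∑ i ∈ s, ∫⁻ ω, Z i ω ^ (q - k) ∂P) * (∑ i ∈ s, ∫⁻ ω, Z i ω ∂P) ^ k :=
  le_lamST_bound_of_le_two_pow_mul (A := fun r => ∫⁻ ω, (∑ i ∈ s, Z i ω) ^ r ∂P)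
    (M := fun r => ∑ i ∈ s, ∫⁻ ω, Z i ω ^ r ∂P)
    (by simp [lintegral_finsetSum _ fun i _ => hZ i]) (lintegral_sum_pow_succ_le hZ hindep s) hq

end FiniteSums

lemma tendsto_lintegral_sum_range_pow {Ω : Type*} [MeasurableSpace Ω] {P : Measure Ω}
    {Z : ℕ → Ω → ℝ≥0∞} (hZ : ∀ n, Measurable (Z n)) (q : ℕ) :
    Tendsto (fun N => ∫⁻ ω, (∑ n ∈ Finset.range N, Z n ω) ^ q ∂P) atTop
      (𝓝 (∫⁻ ω, (∑' n, Z n ω) ^ q ∂P)) :=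
  lintegral_tendsto_of_tendsto_of_monotone
    (fun _ => ((Finset.measurable_sum _ fun n _ => hZ n).pow_const q).aemeasurable)
    (ae_of_all _ fun _ _ _ hNN' =>
      pow_le_pow_left' (Finset.sum_le_sum_of_subset (Finset.range_subset_range.2 hNN')) q)
    (ae_of_all _ fun _ =>
      ((ENNReal.continuous_pow q).tendsto _).comp (ENNReal.tendsto_nat_tsum _))

theorem indep_sum_moment_bound_general
    {Ω : Type*} [MeasurableSpace Ω] (P : Measure Ω)
    (Y : ℕ → Ω → ℝ) (hmeas : ∀ n, Measurable (Y n))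
    (hindep : iIndepFun Y P)
    (q : ℕ) (hq : 2 ≤ q) :
    ∫⁻ ω, (∑' n, ENNReal.ofReal (Y n ω)) ^ q ∂P
      ≤ ENNReal.ofReal (lamST q (q - 1))
            * (∑' n, ∫⁻ ω, ENNReal.ofReal (Y n ω) ∂P) ^ q
        + ∑ k ∈ Finset.range (q - 1),
            ENNReal.ofReal (lamST q k)
              * (∑' n, ∫⁻ ω, ENNReal.ofReal (Y n ω) ^ (q - k) ∂P)
              * (∑' n, ∫⁻ ω, ENNReal.ofReal (Y n ω) ∂P) ^ k := by
  set Z : ℕ → Ω → ℝ≥0∞ := fun n ω => ENNReal.ofReal (Y n ω)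
  have hZ : ∀ n, Measurable (Z n) := fun n => ENNReal.measurable_ofReal.comp (hmeas n)
  have hZindep : iIndepFun Z P := hindep.comp _ fun _ => ENNReal.measurable_ofReal
  refine le_of_tendsto' (tendsto_lintegral_sum_range_pow hZ q) fun N => ?_
  refine (lintegral_sum_pow_le_lamST hZ hZindep (Finset.range N) (by omega)).trans ?_
  gcongr <;> exact ENNReal.sum_le_tsum _

/-- for independent non-negative random variables `Y_n`, with
`𝔖 := Σ Y_n` and `M_k := Σ E[Y_n^k]`, one has, for every integer `q ≥ 2`,
`E[𝔖^q] ≤ λ_{q,q-1} M_1^q + Σ_{k=0}^{q-2} λ_{q,k} M_{q-k} M_1^k`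
(all quantities computed in `ℝ≥0∞`, so the inequality holds trivially when
some quantity is infinite). -/
theorem indep_sum_moment_bound
    {Ω : Type*} [MeasurableSpace Ω] (P : Measure Ω) [IsProbabilityMeasure P]
    (Y : ℕ → Ω → ℝ) (hmeas : ∀ n, Measurable (Y n)) (hpos : ∀ n ω, 0 ≤ Y n ω)
    (hindep : iIndepFun Y P)
    (q : ℕ) (hq : 2 ≤ q) :
    ∫⁻ ω, (∑' n, ENNReal.ofReal (Y n ω)) ^ q ∂P
      ≤ ENNReal.ofReal (lamST q (q - 1))
            * (∑' n, ∫⁻ ω, ENNReal.ofReal (Y n ω) ∂P) ^ q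
        + ∑ k ∈ Finset.range (q - 1),
            ENNReal.ofReal (lamST q k)
              * (∑' n, ∫⁻ ω, ENNReal.ofReal (Y n ω) ^ (q - k) ∂P)
              * (∑' n, ∫⁻ ω, ENNReal.ofReal (Y n ω) ∂P) ^ k :=
  indep_sum_moment_bound_general P Y hmeas hindep q hq
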